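/- arXiv:1608.02720 — 4 statements merged into one kernel-verified Lean document; each statement's English description precedes it below -/
import Mathlib

section
/- Let q > 1 be a real number and d ≥ 2 an integer. Define the sequence (u_n) by u_0 = 1 and u_{n+1} = 1 - (1 - u_n/q^{d-1})^{q^{d-1}}. Then the sequence (u_n) is strictly decreasing and converges to 0. -/
open Filter Topology

/-- For `q ≥ 2` an integer (cast to `ℝ`) and `d ≥ 2`, the sequence defined by
`u 0 = 1` and `u (n+1) = 1 - (1 - u n / q^(d-1))^(q^(d-1))` is strictly decreasing and
converges to `0`. -/
theorem kakeya_sequence_strictAnti_tendsto_zero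
    (q : ℕ) (hq : 2 ≤ q) (d : ℕ) (hd : 2 ≤ d)
    (u : ℕ → ℝ) (h0 : u 0 = 1)
    (hrec : ∀ n, u (n + 1) = 1 - (1 - u n / (q : ℝ) ^ (d - 1)) ^ (q ^ (d - 1))) :
    StrictAnti u ∧ Tendsto u atTop (𝓝 0) := by
  set N : ℕ := q ^ (d - 1) with hNdef
  have hN : 2 ≤ N := by
    calc 2 = 2 ^ 1 := by norm_num
    _ ≤ q ^ 1 := Nat.pow_le_pow_left hq 1
    _ ≤ q ^ (d - 1) := Nat.pow_le_pow_right (by omega) (by omega)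
  have hNR : (2 : ℝ) ≤ (N : ℝ) := by exact_mod_cast hN
  have hNpos : (0 : ℝ) < (N : ℝ) := by linarith
  have hcast : ((q : ℝ)) ^ (d - 1) = (N : ℝ) := by push_cast [hNdef]; ring
  have hrec' : ∀ n, u (n + 1) = 1 - (1 - u n / (N : ℝ)) ^ N := by
    intro n; rw [hrec n, hcast]
  -- key inequality
  have key : ∀ x : ℝ, 0 < x → x ≤ 1 →
      0 < 1 - (1 - x / (N : ℝ)) ^ N ∧ 1 - (1 - x / (N : ℝ)) ^ N < x := by
    intro x hx hx1
    have h1 : x / (N : ℝ) < 1 := by rw [div_lt_one hNpos]; linarith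
    have h1' : 0 < x / (N : ℝ) := div_pos hx hNpos
    have h2 : 0 ≤ 1 - x / (N : ℝ) := by linarith
    have hlt1 : (1 - x / (N : ℝ)) ^ N < 1 :=
      pow_lt_one₀ h2 (by linarith) (by omega)
    have hbern : 1 - x < (1 - x / (N : ℝ)) ^ N := by
      have := one_add_mul_self_lt_rpow_one_add (s := -(x / (N : ℝ)))
        (by linarith) (neg_ne_zero.mpr (ne_of_gt h1')) (p := (N : ℝ)) (by linarith)
      rw [Real.rpow_natCast] at this
      have hx' : (N : ℝ) * (x / (N : ℝ)) = x := by field_simp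
      calc 1 - x = 1 + (N : ℝ) * (-(x / (N : ℝ))) := by rw [mul_neg, hx']; ring
      _ < (1 + -(x / (N : ℝ))) ^ N := this
      _ = (1 - x / (N : ℝ)) ^ N := by ring_nf
    constructor <;> linarith
  -- positivity and bounds by induction
  have hpos : ∀ n, 0 < u n ∧ u n ≤ 1 := by
    intro n
    induction n with
    | zero => rw [h0]; norm_num
    | succ n ih =>
      have := key (u n) ih.1 ih.2
      rw [hrec' n]
      exact ⟨this.1, by linarith [this.2, ih.1, ih.2]⟩
  have hsa : StrictAnti u := by
    apply strictAnti_nat_of_succ_lt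
    intro n
    rw [hrec' n]
    exact (key (u n) (hpos n).1 (hpos n).2).2
  refine ⟨hsa, ?_⟩
  have hbdd : BddBelow (Set.range u) := ⟨0, fun x ⟨n, hn⟩ => hn ▸ (hpos n).1.le⟩
  have htend : Tendsto u atTop (𝓝 (⨅ n, u n)) := tendsto_atTop_ciInf hsa.antitone hbdd
  set L := ⨅ n, u n with hLdef
  have hL0 : 0 ≤ L := le_ciInf fun n => (hpos n).1.le
  have hL1 : L ≤ 1 := le_trans (ciInf_le hbdd 0) (le_of_eq h0)
  have hfix : L = 1 - (1 - L / (N : ℝ)) ^ N := by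
    have h1 : Tendsto (fun n => u (n + 1)) atTop (𝓝 L) :=
      htend.comp (tendsto_add_atTop_nat 1)
    have h2 : Tendsto (fun n => 1 - (1 - u n / (N : ℝ)) ^ N) atTop
        (𝓝 (1 - (1 - L / (N : ℝ)) ^ N)) :=
      tendsto_const_nhds.sub ((tendsto_const_nhds.sub (htend.div_const _)).pow N)
    have h3 : Tendsto (fun n => u (n + 1)) atTop (𝓝 (1 - (1 - L / (N : ℝ)) ^ N)) := by
      simpa only [hrec'] using h2
    exact tendsto_nhds_unique h1 h3
  have hLz : L = 0 := by
    by_contra h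
    have hLpos : 0 < L := lt_of_le_of_ne hL0 (Ne.symm h)
    have := (key L hLpos hL1).2
    linarith
  rwa [hLz] at htend
end

section
/- Let q ≥ 2 be an integer, d ≥ 2, and let (u_n) satisfy u_0 = 1, u_{n+1} = 1 - (1 - u_n/q^{d-1})^{q^{d-1}}. Then n·u_n converges to 2q^{d-1}/(q^{d-1} - 1) as n → ∞; equivalently u_n ~ 1/(c·n) with c = (q^{d-1}-1)/(2q^{d-1}). -/
/-! With `m = q ^ (d - 1)`, writing `1 - (1 - t) ^ m` through geometric sums turns the recursion
into `u (n + 1) = u n - u n ^ 2 * H (u n)` for a polynomial `H` that is positive on `[0, m]` with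
`H 0 = (m - 1) / (2 * m)`. So `u` decreases to the only fixed point `0`, the increments
`1 / u (n + 1) - 1 / u n` tend to `H 0`, and by Cesàro `1 / (n * u n) → H 0`. -/

open Filter Topology Finset

theorem one_sub_pow_eq_sum_sum {R : Type*} [CommRing R] (t : R) (m : ℕ) :
    (1 - t) ^ m = 1 - m * t + t ^ 2 * ∑ i ∈ range m, ∑ j ∈ range i, (1 - t) ^ j := by
  have hgeom (n : ℕ) : (1 - t) ^ n = 1 - t * ∑ j ∈ range n, (1 - t) ^ j := by
    linear_combination -geom_sum_mul (1 - t) n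
  rw [hgeom m, sum_congr rfl fun i _ => hgeom i, sum_sub_distrib, ← mul_sum]
  simp only [sum_const, card_range, nsmul_eq_mul, mul_one]
  ring

theorem sum_range_sum_range_pow_pos {R : Type*} [Semiring R] [PartialOrder R]
    [IsStrictOrderedRing R] {x : R} (hx : 0 ≤ x) {m : ℕ} (hm : 2 ≤ m) :
    0 < ∑ i ∈ range m, ∑ j ∈ range i, x ^ j := by
  exact sum_pos' (fun i _ => by positivity) ⟨1, by simp; omega, by simp⟩

theorem sum_range_natCast_mul_two {R : Type*} [CommRing R] (m : ℕ) :
    (∑ i ∈ range m, (i : R)) * 2 = m * (m - 1) := by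
  induction m with
  | zero => simp
  | succ k ih => rw [sum_range_succ, add_mul, ih]; push_cast; ring

theorem tendsto_div_natCast_of_tendsto_sub {v : ℕ → ℝ} {c : ℝ}
    (hv : Tendsto (fun n => v (n + 1) - v n) atTop (𝓝 c)) :
    Tendsto (fun n : ℕ => v n / n) atTop (𝓝 c) := by
  have hmean := hv.cesaro
  simp only [sum_range_sub] at hmean
  have hshift := (tendsto_inv_atTop_nhds_zero_nat (𝕜 := ℝ)).const_mul (v 0)
  rw [mul_zero] at hshift
  simpa only [add_zero] using (hmean.add hshift).congr fun n => by ring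

section SubSq

variable {u : ℕ → ℝ} {H : ℝ → ℝ}

theorem tendsto_zero_of_eq_sub_sq {a : ℝ} (hmem : ∀ n, u n ∈ Set.Ioc 0 a) (hH : Continuous H)
    (hHpos : ∀ x ∈ Set.Ioc 0 a, 0 < H x) (hrec : ∀ n, u (n + 1) = u n - u n ^ 2 * H (u n)) :
    Tendsto u atTop (𝓝 0) := by
  have hanti : Antitone u := antitone_nat_of_succ_le fun n => by
    rw [hrec]
    have := hHpos _ (hmem n)
    exact sub_le_self _ (by positivity)
  have hbdd : BddBelow (Set.range u) := ⟨0, by rintro _ ⟨n, rfl⟩; exact (hmem n).1.le⟩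
  set L := ⨅ n, u n
  have hlim : Tendsto u atTop (𝓝 L) := tendsto_atTop_ciInf hanti hbdd
  have hfix : L = L - L ^ 2 * H L := by
    refine tendsto_nhds_unique (hlim.comp (tendsto_add_atTop_nat 1)) ?_
    simp only [Function.comp_def, hrec]
    exact hlim.sub ((hlim.pow 2).mul ((hH.tendsto L).comp hlim))
  have hL0 : 0 ≤ L := le_ciInf fun n => (hmem n).1.le
  have hLa : L ≤ a := (ciInf_le hbdd 0).trans (hmem 0).2
  obtain hL | hL := hL0.eq_or_lt
  · rwa [← hL] at hlim
  · have := hHpos L ⟨hL, hLa⟩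
    have : 0 < L ^ 2 * H L := by positivity
    linarith

theorem tendsto_inv_sub_inv_of_eq_sub_sq (hpos : ∀ n, 0 < u n) (hu : Tendsto u atTop (𝓝 0))
    (hH : ContinuousAt H 0) (hrec : ∀ n, u (n + 1) = u n - u n ^ 2 * H (u n)) :
    Tendsto (fun n => (u (n + 1))⁻¹ - (u n)⁻¹) atTop (𝓝 (H 0)) := by
  have hdiff (n : ℕ) : (u (n + 1))⁻¹ - (u n)⁻¹ = H (u n) / (1 - u n * H (u n)) := by
    have hfactor : u (n + 1) = u n * (1 - u n * H (u n)) := by rw [hrec]; ring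
    have hne : 1 - u n * H (u n) ≠ 0 := fun h => (hpos (n + 1)).ne' (by rw [hfactor, h, mul_zero])
    have hun := (hpos n).ne'
    rw [hfactor]
    field_simp
    ring
  have hcont : ContinuousAt (fun x => H x / (1 - x * H x)) 0 :=
    hH.div (continuousAt_const.sub (continuousAt_id.mul hH)) (by simp)
  simpa only [hdiff, Function.comp_def, zero_mul, sub_zero, div_one] using hcont.tendsto.comp hu

theorem tendsto_natCast_mul_of_eq_sub_sq (hpos : ∀ n, 0 < u n) (hu : Tendsto u atTop (𝓝 0))
    (hH : ContinuousAt H 0) (hH0 : H 0 ≠ 0) (hrec : ∀ n, u (n + 1) = u n - u n ^ 2 * H (u n)) :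
    Tendsto (fun n : ℕ => n * u n) atTop (𝓝 (H 0)⁻¹) := by
  have hinv := (tendsto_div_natCast_of_tendsto_sub (v := fun n => (u n)⁻¹)
    (tendsto_inv_sub_inv_of_eq_sub_sq hpos hu hH hrec)).inv₀ hH0
  simpa only [inv_div, div_inv_eq_mul] using hinv

end SubSq

noncomputable def stepSqCoeff (m : ℕ) (x : ℝ) : ℝ :=
  (∑ i ∈ range m, ∑ j ∈ range i, (1 - x / m) ^ j) / m ^ 2

section Step

variable {m : ℕ}

theorem one_sub_one_sub_div_pow_mem_Ioc (hm : m ≠ 0) {x : ℝ} (hx : x ∈ Set.Ioc 0 (m : ℝ)) :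
    1 - (1 - x / m) ^ m ∈ Set.Ioc 0 1 := by
  have hm' : (0 : ℝ) < m := by positivity
  have hbase : 0 ≤ 1 - x / m := sub_nonneg.2 ((div_le_one hm').2 hx.2)
  have hbase' : 1 - x / m < 1 := sub_lt_self _ (div_pos hx.1 hm')
  have := pow_lt_one₀ hbase hbase' hm
  have := pow_nonneg hbase m
  constructor <;> linarith

theorem one_sub_one_sub_div_pow_eq (hm : m ≠ 0) (x : ℝ) :
    1 - (1 - x / m) ^ m = x - x ^ 2 * stepSqCoeff m x := by
  rw [stepSqCoeff, one_sub_pow_eq_sum_sum]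
  field_simp
  ring

theorem continuous_stepSqCoeff (m : ℕ) : Continuous (stepSqCoeff m) := by
  unfold stepSqCoeff
  fun_prop

theorem stepSqCoeff_pos (hm : 2 ≤ m) {x : ℝ} (hx : x ≤ m) : 0 < stepSqCoeff m x := by
  have hm' : (0 : ℝ) < m := by positivity
  have hbase : 0 ≤ 1 - x / m := sub_nonneg.2 ((div_le_one hm').2 hx)
  exact div_pos (sum_range_sum_range_pow_pos hbase hm) (by positivity)

theorem stepSqCoeff_zero (hm : m ≠ 0) : stepSqCoeff m 0 = (m - 1) / (2 * m) := by
  have hgauss := sum_range_natCast_mul_two (R := ℝ) m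
  simp only [stepSqCoeff, zero_div, sub_zero, one_pow, sum_const, card_range,
    nsmul_eq_mul, mul_one]
  field_simp
  linear_combination hgauss

end Step

/-- With `u 0 = 1` and `u (n+1) = 1 - (1 - u n / q^(d-1))^(q^(d-1))`
(`q ≥ 2`, `d ≥ 2`), one has `n * u n → 2 q^(d-1) / (q^(d-1) - 1)`. -/
theorem kakeya_sequence_asymptotics
    (q : ℕ) (hq : 2 ≤ q) (d : ℕ) (hd : 2 ≤ d)
    (u : ℕ → ℝ) (h0 : u 0 = 1)
    (hrec : ∀ n, u (n + 1) = 1 - (1 - u n / (q : ℝ) ^ (d - 1)) ^ (q ^ (d - 1))) :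
    Tendsto (fun n : ℕ => (n : ℝ) * u n) atTop
      (𝓝 (2 * (q : ℝ) ^ (d - 1) / ((q : ℝ) ^ (d - 1) - 1))) := by
  set m := q ^ (d - 1) with hm_def
  have hm : 2 ≤ m := hq.trans (Nat.le_self_pow (by omega) q)
  have hm1 : (1 : ℝ) < m := by exact_mod_cast hm
  rw [show (q : ℝ) ^ (d - 1) = m by push_cast [hm_def]; ring] at hrec ⊢
  have hrec' (n : ℕ) : u (n + 1) = u n - u n ^ 2 * stepSqCoeff m (u n) := by
    rw [hrec, one_sub_one_sub_div_pow_eq (by omega)]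
  have hmem (n : ℕ) : u n ∈ Set.Ioc 0 1 := by
    induction n with
    | zero => simp [h0]
    | succ n ih =>
      rw [hrec]
      exact one_sub_one_sub_div_pow_mem_Ioc (by omega) ⟨ih.1, ih.2.trans hm1.le⟩
  have hu : Tendsto u atTop (𝓝 0) := tendsto_zero_of_eq_sub_sq hmem (continuous_stepSqCoeff m)
    (fun x hx => stepSqCoeff_pos hm (hx.2.trans hm1.le)) hrec'
  have hcoeff : stepSqCoeff m 0 = (m - 1) / (2 * m) := stepSqCoeff_zero (by omega)
  have hlim := tendsto_natCast_mul_of_eq_sub_sq (fun n => (hmem n).1) hu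
    (continuous_stepSqCoeff m).continuousAt
    (by rw [hcoeff]; exact div_ne_zero (by linarith) (by positivity)) hrec'
  rwa [hcoeff, inv_div] at hlim
end

section
/- For a, b ∈ ℙ^{d-1}(R_n), let v_n(a,b) be the largest v ∈ {0,…,n} such that a and b have equal images in ℙ^{d-1}(R_v). Then can_n(b) - can_n(a) = π^{v_n(a,b)} · u for some u ∈ R_n^d having at least one invertible coordinate, where can_n denotes the canonical representative (first unit coordinate equal to 1). -/
/-!
Lift the two representatives to `R`. Agreement modulo `π^v` says `π^v` divides every coordinate
of the difference `b - a`, so `b - a = π^v • y`. Maximality of `v` says that `π^(v+1)` does not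
divide all coordinates, hence some `y i` is not divisible by `π`; in a discrete valuation ring
this makes `y i` a unit, and units stay units in `R ⧸ (π)^n`. When `v = n` the difference already
vanishes in `R ⧸ (π)^n` and any `u`, e.g. the constant `1`, works.
-/

open Ideal

namespace Ideal.Quotient

variable {R : Type*} [CommRing R]

theorem factor_pow_span_singleton_mk_eq_iff {π : R} {v n : ℕ}
    (h : span {π} ^ n ≤ span {π} ^ v) (a b : R) :
    factor h (mk _ a) = factor h (mk _ b) ↔ π ^ v ∣ b - a := by
  rw [factor_mk, factor_mk, Quotient.eq, span_singleton_pow, mem_span_singleton, dvd_sub_comm]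

theorem mk_span_singleton_pow_pow_self (π : R) (n : ℕ) :
    mk (span {π} ^ n) (π ^ n) = 0 := by
  rw [eq_zero_iff_mem, span_singleton_pow]
  exact mem_span_singleton_self _

end Ideal.Quotient

namespace IsDiscreteValuationRing

variable {R : Type*} [CommRing R] [IsDomain R] [IsDiscreteValuationRing R] {π : R}

theorem dvd_of_not_isUnit (hπ : Irreducible π) {x : R} (hx : ¬IsUnit x) : π ∣ x := by
  rw [← mem_span_singleton, ← (irreducible_iff_uniformizer π).mp hπ]
  exact hx

theorem exists_pow_mul_of_not_forall_pow_succ_dvd {ι : Type*} (hπ : Irreducible π) {v : ℕ}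
    {x : ι → R} (hdvd : ∀ i, π ^ v ∣ x i) (hmax : ¬∀ i, π ^ (v + 1) ∣ x i) :
    ∃ y : ι → R, (∃ i, IsUnit (y i)) ∧ ∀ i, x i = π ^ v * y i := by
  choose y hy using hdvd
  refine ⟨y, ?_, hy⟩
  by_contra! hy_nonunit
  refine hmax fun i => ?_
  rw [hy i, pow_succ]
  exact mul_dvd_mul_left _ (dvd_of_not_isUnit hπ (hy_nonunit i))

end IsDiscreteValuationRing

open Ideal.Quotient IsDiscreteValuationRing

theorem canonical_sub_eq_pow_uniformizer_smul_general
    (R : Type*) [CommRing R] [IsDomain R] [IsDiscreteValuationRing R]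
    (π : R) (hπ : Irreducible π) (d n : ℕ) (hd : 2 ≤ d)
    (ca cb : Fin d → R ⧸ (Ideal.span {π} : Ideal R) ^ n)
    (v : ℕ) (hvle : v ≤ n)
    (hveq : ∀ i,
      Ideal.Quotient.factor (Ideal.pow_le_pow_right hvle) (ca i) =
      Ideal.Quotient.factor (Ideal.pow_le_pow_right hvle) (cb i))
    (hvmax : ∀ h : v + 1 ≤ n, ¬ ∀ i,
      Ideal.Quotient.factor (Ideal.pow_le_pow_right h) (ca i) =
      Ideal.Quotient.factor (Ideal.pow_le_pow_right h) (cb i)) :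
    ∃ u : Fin d → R ⧸ (Ideal.span {π} : Ideal R) ^ n,
      (∃ i, IsUnit (u i)) ∧
      ∀ i, cb i - ca i = (Ideal.Quotient.mk _ π) ^ v * u i := by
  choose a ha using fun i => mk_surjective (ca i)
  choose b hb using fun i => mk_surjective (cb i)
  obtain rfl : (fun i => mk _ (a i)) = ca := funext ha
  obtain rfl : (fun i => mk _ (b i)) = cb := funext hb
  simp only [factor_pow_span_singleton_mk_eq_iff] at hveq hvmax
  obtain rfl | hv := eq_or_lt_of_le hvle
  · refine ⟨fun _ => 1, ⟨⟨0, by omega⟩, isUnit_one⟩, fun i => ?_⟩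
    obtain ⟨c, hc⟩ := hveq i
    rw [← map_sub, hc, ← map_pow, map_mul, mk_span_singleton_pow_pow_self, zero_mul,
      zero_mul]
  · obtain ⟨y, ⟨i, hi⟩, hy⟩ :=
      exists_pow_mul_of_not_forall_pow_succ_dvd hπ hveq (hvmax hv)
    refine ⟨fun i => mk _ (y i), ⟨i, hi.map _⟩, fun i => ?_⟩
    rw [← map_sub, hy i, map_mul, map_pow]

/-- Let `R` be a complete discrete valuation ring with uniformizer `π`, and
`R_n = R/(π)^n`. Let `ca, cb` be canonical representatives (first invertible coordinate
equal to `1`, earlier coordinates non-invertible) of two points of `ℙ^{d-1}(R_n)`, and let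
`v = v_n(a,b)` be the largest `v ≤ n` such that the reductions of `ca` and `cb` modulo
`(π)^v` agree. Then `cb - ca = π^v · u` for some tuple `u ∈ R_n^d` having at least one
invertible coordinate. -/
theorem canonical_sub_eq_pow_uniformizer_smul
    (R : Type*) [CommRing R] [IsDomain R] [IsDiscreteValuationRing R]
    [IsAdicComplete (IsLocalRing.maximalIdeal R) R]
    (π : R) (hπ : Irreducible π) (d n : ℕ) (hn : 1 ≤ n) (hd : 2 ≤ d)
    (ca cb : Fin d → R ⧸ (Ideal.span {π} : Ideal R) ^ n)
    (hcaCan : ∃ j, ca j = 1 ∧ ∀ i < j, ¬IsUnit (ca i))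
    (hcbCan : ∃ j, cb j = 1 ∧ ∀ i < j, ¬IsUnit (cb i))
    (v : ℕ) (hvle : v ≤ n)
    (hveq : ∀ i,
      Ideal.Quotient.factor (Ideal.pow_le_pow_right hvle) (ca i) =
      Ideal.Quotient.factor (Ideal.pow_le_pow_right hvle) (cb i))
    (hvmax : ∀ h : v + 1 ≤ n, ¬ ∀ i,
      Ideal.Quotient.factor (Ideal.pow_le_pow_right h) (ca i) =
      Ideal.Quotient.factor (Ideal.pow_le_pow_right h) (cb i)) :
    ∃ u : Fin d → R ⧸ (Ideal.span {π} : Ideal R) ^ n,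
      (∃ i, IsUnit (u i)) ∧
      ∀ i, cb i - ca i = (Ideal.Quotient.mk _ π) ^ v * u i :=
  canonical_sub_eq_pow_uniformizer_smul_general R π hπ d n hd ca cb v hvle hveq hvmax
end

section
/- Fix n ≥ 1, ℓ ∈ {0,…,n}, a ∈ ℙ^1(R_n) and b ∈ R_n^2. The segment S_a = {t·can_n(a) + b : t ∈ π^ℓ R_n} has cardinality exactly q^{n-ℓ}. Moreover, for a, b ∈ ℙ^1(R_n) and any two segments S_a, S_b of length q^{-ℓ} in directions a and b, the intersection S_a ∩ S_b is either empty or has cardinality q^{min(n-ℓ, v_n(a,b))}, where v_n(a,b) is the largest v ≤ n with sp_{n,v}(a) = sp_{n,v}(b). -/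
/-!
A segment `{t • a + b : t ∈ T}` whose direction has a unit coordinate is in bijection with its
parameter ideal `T`, and in `R ⧸ (π)^n` the ideal `(π^k)` has `q^(n-k)` elements. Two segments
through a common point `x` with canonical directions `a`, `a'` meet exactly in the segment through
`x` whose parameters also kill `a - a'`: for equal pivots the two parameters agree on the pivot
coordinate, while for different pivots both vanish and `a - a'` has a unit entry. Finally the
annihilator of `a - a'` is `(π^(n-v))`, so the intersection is parametrized by `(π^max(ℓ, n-v))`.
-/

theorem Ideal.span_singleton_pow_inf {A : Type*} [CommSemiring A] (x : A) (i j : ℕ) :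
    span {x ^ i} ⊓ span {x ^ j} = span {x ^ max i j} := by
  rcases le_total i j with h | h
  · rw [max_eq_right h, inf_eq_right, span_singleton_le_span_singleton]
    exact pow_dvd_pow x h
  · rw [max_eq_left h, inf_eq_left, span_singleton_le_span_singleton]
    exact pow_dvd_pow x h

theorem Ideal.map_span_singleton_pow {A B : Type*} [CommSemiring A] [CommSemiring B]
    (f : A →+* B) (x : A) (k : ℕ) : (span {x} ^ k).map f = span {f x ^ k} := by
  rw [Ideal.map_pow, map_span, Set.image_singleton, span_singleton_pow]

theorem IsLocalRing.quotient {A : Type*} [CommRing A] [IsLocalRing A] {I : Ideal A}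
    (hI : I ≠ ⊤) : IsLocalRing (A ⧸ I) :=
  have : Nontrivial (A ⧸ I) := Ideal.Quotient.nontrivial_iff.mpr hI
  .of_surjective' _ Ideal.Quotient.mk_surjective

section Segments

variable {A ι : Type*} [CommRing A]

namespace Ideal

def segment (T : Ideal A) (a b : ι → A) : Set (ι → A) :=
  (fun t => t • a + b) '' (T : Set A)

variable {T : Ideal A} {a b x : ι → A}

theorem segment_span_singleton (c : A) (a b : ι → A) :
    (span {c}).segment a b = {x | ∃ s, x = fun i => c * s * a i + b i} := by
  ext x
  simp only [segment, Set.mem_image, SetLike.mem_coe, mem_span_singleton', Set.mem_ofPred_eq]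
  constructor
  · rintro ⟨_, ⟨s, rfl⟩, rfl⟩
    exact ⟨s, funext fun i => by simp [mul_comm s c]⟩
  · rintro ⟨s, rfl⟩
    exact ⟨s * c, ⟨s, rfl⟩, funext fun i => by simp [mul_comm s c]⟩

theorem card_segment (T : Ideal A) (b : ι → A) (ha : ∃ j, IsUnit (a j)) :
    Nat.card (T.segment a b) = Nat.card T := by
  obtain ⟨j, hj⟩ := ha
  refine Nat.card_image_of_injective (fun t t' h => ?_) _
  simpa [hj.mul_left_inj] using congrFun h j

theorem segment_eq_of_mem (hx : x ∈ T.segment a b) : T.segment a b = T.segment a x := by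
  obtain ⟨t₀, ht₀, rfl⟩ := hx
  ext y
  constructor
  · rintro ⟨t, ht, rfl⟩
    exact ⟨t - t₀, T.sub_mem ht ht₀, by simp only [sub_smul]; abel⟩
  · rintro ⟨s, hs, rfl⟩
    exact ⟨s + t₀, T.add_mem hs ht₀, by simp only [add_smul]; abel⟩

end Ideal

/-- The canonical representative `can_n` of a point of `ℙ^1`: its first unit entry is `1`. -/
def IsCanonicalRep [LT ι] (a : ι → A) : Prop :=
  ∃ j, a j = 1 ∧ ∀ i < j, ¬IsUnit (a i)

theorem IsCanonicalRep.exists_isUnit [LT ι] {a : ι → A} (ha : IsCanonicalRep a) :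
    ∃ j, IsUnit (a j) :=
  let ⟨j, hj, _⟩ := ha
  ⟨j, hj ▸ isUnit_one⟩

theorem eq_zero_of_smul_eq_smul_of_pivot_ne [IsLocalRing A] {a a' : ι → A} {j j' : ι}
    (hj : a j = 1) (hj' : a' j' = 1) (hnu : ¬IsUnit (a' j)) {t t' : A} (h : t • a = t' • a') :
    t = 0 ∧ t' = 0 := by
  have hjt : t = t' * a' j := by simpa [hj] using congrFun h j
  have hjt' : t * a j' = t' := by simpa [hj'] using congrFun h j'
  have hunit : IsUnit (1 - a' j * a j') :=
    IsLocalRing.isUnit_one_sub_self_of_mem_nonunits _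
      fun hu => hnu (isUnit_of_mul_isUnit_left hu)
  have ht' : t' = 0 := by
    refine (hunit.mul_left_eq_zero).mp ?_
    linear_combination -hjt' + a j' * hjt
  exact ⟨by rw [hjt, ht', zero_mul], ht'⟩

theorem smul_eq_smul_iff_of_isCanonicalRep [IsLocalRing A] [LinearOrder ι] {a a' : ι → A}
    (ha : IsCanonicalRep a) (ha' : IsCanonicalRep a') {t t' : A} :
    t • a = t' • a' ↔ t = t' ∧ t • (a - a') = 0 := by
  obtain ⟨j, hj, hja⟩ := ha
  obtain ⟨j', hj', hja'⟩ := ha'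
  constructor
  · intro h
    rcases lt_trichotomy j j' with hlt | rfl | hgt
    · obtain ⟨rfl, rfl⟩ := eq_zero_of_smul_eq_smul_of_pivot_ne hj hj' (hja' j hlt) h
      simp
    · have htt : t = t' := by simpa [hj, hj'] using congrFun h j
      subst htt
      exact ⟨rfl, by rw [smul_sub, h, sub_self]⟩
    · obtain ⟨rfl, rfl⟩ := eq_zero_of_smul_eq_smul_of_pivot_ne hj' hj (hja j' hgt) h.symm
      simp
  · rintro ⟨rfl, h⟩
    rwa [smul_sub, sub_eq_zero] at h

theorem Ideal.segment_inter_segment_of_isCanonicalRep [IsLocalRing A] [LinearOrder ι]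
    {a a' : ι → A} (ha : IsCanonicalRep a) (ha' : IsCanonicalRep a') (T : Ideal A) (x : ι → A) :
    T.segment a x ∩ T.segment a' x = (T ⊓ (A ∙ (a - a')).annihilator).segment a x := by
  ext y
  simp only [segment, Set.mem_inter_iff, Set.mem_image, SetLike.mem_coe, Submodule.mem_inf,
    Submodule.mem_annihilator_span_singleton]
  constructor
  · rintro ⟨⟨t, ht, rfl⟩, ⟨t', -, h⟩⟩
    obtain ⟨-, hann⟩ := (smul_eq_smul_iff_of_isCanonicalRep ha ha').mp (add_right_cancel h).symm
    exact ⟨t, ⟨ht, hann⟩, rfl⟩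
  · rintro ⟨t, ⟨ht, hann⟩, rfl⟩
    refine ⟨⟨t, ht, rfl⟩, ⟨t, ht, ?_⟩⟩
    rw [(smul_eq_smul_iff_of_isCanonicalRep ha ha').mpr ⟨rfl, hann⟩]

end Segments

section PowerQuotient

variable {A : Type*} [CommRing A] {π : A} {n : ℕ}

theorem span_pow_ne_top (hπ : Irreducible π) (hn : n ≠ 0) : Ideal.span {π} ^ n ≠ ⊤ := by
  rw [Ideal.span_singleton_pow, Ne, Ideal.span_singleton_eq_top, isUnit_pow_iff hn]
  exact hπ.not_isUnit

theorem mk_mem_span_pow_iff {k : ℕ} (hk : k ≤ n) (r : A) :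
    Ideal.Quotient.mk (Ideal.span {π} ^ n) r ∈
        Ideal.span {Ideal.Quotient.mk (Ideal.span {π} ^ n) π ^ k} ↔ π ^ k ∣ r := by
  rw [← Ideal.map_span_singleton_pow,
    Ideal.mem_quotient_iff_mem (Ideal.pow_le_pow_right hk), Ideal.span_singleton_pow,
    Ideal.mem_span_singleton]

theorem factor_eq_factor_iff {v : ℕ} (hv : v ≤ n) {x y : A ⧸ Ideal.span {π} ^ n} :
    Ideal.Quotient.factor (Ideal.pow_le_pow_right hv) x =
        Ideal.Quotient.factor (Ideal.pow_le_pow_right hv) y ↔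
      x - y ∈ Ideal.span {Ideal.Quotient.mk (Ideal.span {π} ^ n) π ^ v} := by
  rw [← sub_eq_zero, ← map_sub, ← RingHom.mem_ker, Ideal.Quotient.factor_ker,
    Ideal.map_span_singleton_pow]

theorem mul_pow_mk_eq_zero_iff [IsDomain A] (hπ : π ≠ 0) {v : ℕ} (hv : v ≤ n)
    (t : A ⧸ Ideal.span {π} ^ n) :
    t * Ideal.Quotient.mk (Ideal.span {π} ^ n) π ^ v = 0 ↔
      t ∈ Ideal.span {Ideal.Quotient.mk (Ideal.span {π} ^ n) π ^ (n - v)} := by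
  obtain ⟨r, rfl⟩ := Ideal.Quotient.mk_surjective t
  rw [mk_mem_span_pow_iff (Nat.sub_le n v), ← map_pow, ← map_mul,
    Ideal.Quotient.eq_zero_iff_mem, Ideal.span_singleton_pow, Ideal.mem_span_singleton,
    ← Nat.sub_add_cancel hv, pow_add, Nat.add_sub_cancel]
  exact mul_dvd_mul_iff_right (pow_ne_zero v hπ)

end PowerQuotient

section Truncation

open IsLocalRing

variable {R : Type*} [CommRing R] [IsDomain R] [IsDiscreteValuationRing R] {π : R} {n : ℕ}

theorem card_quotient_span_pow (hπ : Irreducible π) (m : ℕ) :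
    Nat.card (R ⧸ Ideal.span {π} ^ m) = Nat.card (ResidueField R) ^ m := by
  have hne : Ideal.span {π} ≠ ⊥ := by simpa using hπ.ne_zero
  have : (Ideal.span {π}).IsPrime := by rw [← hπ.maximalIdeal_eq]; infer_instance
  rw [← Submodule.cardQuot_apply, cardQuot_pow_of_prime hne, Submodule.cardQuot_apply,
    ← hπ.maximalIdeal_eq]
  rfl

theorem card_span_pow_mk [Finite (ResidueField R)] (hπ : Irreducible π) {k : ℕ} (hk : k ≤ n) :
    Nat.card (Ideal.span {Ideal.Quotient.mk (Ideal.span {π} ^ n) π ^ k}) =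
      Nat.card (ResidueField R) ^ (n - k) := by
  have hquot : Nat.card ((R ⧸ Ideal.span {π} ^ n) ⧸
      Ideal.span {Ideal.Quotient.mk (Ideal.span {π} ^ n) π ^ k}) =
        Nat.card (ResidueField R) ^ k := by
    rw [← Ideal.map_span_singleton_pow,
      Nat.card_congr (DoubleQuot.quotQuotEquivQuotSup _ _).toEquiv,
      sup_eq_right.mpr (Ideal.pow_le_pow_right hk), card_quotient_span_pow hπ]
  have hlagrange := AddSubgroup.card_eq_card_quotient_mul_card_addSubgroup
    (Ideal.span {Ideal.Quotient.mk (Ideal.span {π} ^ n) π ^ k}).toAddSubgroup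
  rw [card_quotient_span_pow hπ] at hlagrange
  refine Nat.eq_of_mul_eq_mul_left (pow_pos (Nat.card_pos (α := ResidueField R)) k) ?_
  rw [← pow_add, Nat.add_sub_cancel' hk, ← hquot]
  exact hlagrange.symm

theorem exists_isUnit_mul_pow_mk (hπ : Irreducible π) {v : ℕ} (hv : v < n)
    {x : R ⧸ Ideal.span {π} ^ n}
    (hx : x ∈ Ideal.span {Ideal.Quotient.mk (Ideal.span {π} ^ n) π ^ v})
    (hx' : x ∉ Ideal.span {Ideal.Quotient.mk (Ideal.span {π} ^ n) π ^ (v + 1)}) :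
    ∃ u, IsUnit u ∧ x = u * Ideal.Quotient.mk (Ideal.span {π} ^ n) π ^ v := by
  obtain ⟨r, rfl⟩ := Ideal.Quotient.mk_surjective x
  rw [mk_mem_span_pow_iff hv.le] at hx
  rw [mk_mem_span_pow_iff hv] at hx'
  obtain ⟨u, rfl⟩ := hx
  have hu : IsUnit u := by
    by_contra hu
    obtain ⟨c, rfl⟩ : π ∣ u := by
      rw [← Ideal.mem_span_singleton, ← hπ.maximalIdeal_eq]
      exact (mem_maximalIdeal u).mpr hu
    exact hx' ⟨c, by rw [pow_succ]; ring⟩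
  exact ⟨_, hu.map _, by rw [map_mul, map_pow, mul_comm]⟩

theorem annihilator_span_singleton_eq_span_pow {ι : Type*} (hπ : Irreducible π) {v : ℕ}
    (hv : v ≤ n) (d : ι → R ⧸ Ideal.span {π} ^ n)
    (hd : ∀ i, d i ∈ Ideal.span {Ideal.Quotient.mk (Ideal.span {π} ^ n) π ^ v})
    (hmax : v < n → ¬∀ i, d i ∈ Ideal.span {Ideal.Quotient.mk (Ideal.span {π} ^ n) π ^ (v + 1)}) :
    (_ ∙ d).annihilator = Ideal.span {Ideal.Quotient.mk (Ideal.span {π} ^ n) π ^ (n - v)} := by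
  ext t
  rw [Submodule.mem_annihilator_span_singleton]
  constructor
  · intro ht
    rcases hv.lt_or_eq with hlt | rfl
    · obtain ⟨i, hi⟩ := not_forall.mp (hmax hlt)
      obtain ⟨u, hu, hdi⟩ := exists_isUnit_mul_pow_mk hπ hlt (hd i) hi
      rw [← mul_pow_mk_eq_zero_iff hπ.ne_zero hv, ← hu.mul_left_eq_zero]
      calc t * Ideal.Quotient.mk _ π ^ v * u = t * d i := by rw [hdi]; ring
        _ = 0 := congrFun ht i
    · simp
  · intro ht
    obtain ⟨c, rfl⟩ := Ideal.mem_span_singleton'.mp ht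
    funext i
    obtain ⟨e, he⟩ := Ideal.mem_span_singleton'.mp (hd i)
    have hzero : Ideal.Quotient.mk (Ideal.span {π} ^ n) π ^ n = 0 := by
      rw [← map_pow, Ideal.Quotient.eq_zero_iff_mem, Ideal.span_singleton_pow]
      exact Ideal.mem_span_singleton_self _
    calc c * Ideal.Quotient.mk _ π ^ (n - v) * d i
        = c * e * Ideal.Quotient.mk (Ideal.span {π} ^ n) π ^ (n - v + v) := by
          rw [← he, pow_add]; ring
      _ = 0 := by rw [Nat.sub_add_cancel hv, hzero, mul_zero]

end Truncation

theorem segment_card_and_intersection_general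
    (R : Type*) [CommRing R] [IsDomain R] [IsDiscreteValuationRing R]
    [Finite (IsLocalRing.ResidueField R)]
    (q : ℕ) (hq : q = Nat.card (IsLocalRing.ResidueField R))
    (π : R) (hπ : Irreducible π)
    (n ℓ : ℕ) (hn : 1 ≤ n) (hℓ : ℓ ≤ n)
    (a a' : Fin 2 → R ⧸ (Ideal.span {π} : Ideal R) ^ n)
    (haCan : ∃ j, a j = 1 ∧ ∀ i < j, ¬IsUnit (a i))
    (haCan' : ∃ j, a' j = 1 ∧ ∀ i < j, ¬IsUnit (a' i))
    (b b' : Fin 2 → R ⧸ (Ideal.span {π} : Ideal R) ^ n)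
    (S S' : Set (Fin 2 → R ⧸ (Ideal.span {π} : Ideal R) ^ n))
    (hS : S = {x | ∃ s : R ⧸ (Ideal.span {π} : Ideal R) ^ n,
      x = fun i => (Ideal.Quotient.mk _ π) ^ ℓ * s * a i + b i})
    (hS' : S' = {x | ∃ s : R ⧸ (Ideal.span {π} : Ideal R) ^ n,
      x = fun i => (Ideal.Quotient.mk _ π) ^ ℓ * s * a' i + b' i})
    (v : ℕ) (hvle : v ≤ n)
    (hveq : ∀ i,
      Ideal.Quotient.factor (Ideal.pow_le_pow_right hvle) (a i) =
      Ideal.Quotient.factor (Ideal.pow_le_pow_right hvle) (a' i))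
    (hvmax : ∀ h : v + 1 ≤ n, ¬ ∀ i,
      Ideal.Quotient.factor (Ideal.pow_le_pow_right h) (a i) =
      Ideal.Quotient.factor (Ideal.pow_le_pow_right h) (a' i)) :
    Nat.card S = q ^ (n - ℓ) ∧
    (S ∩ S' = ∅ ∨ Nat.card ↥(S ∩ S') = q ^ (min (n - ℓ) v)) := by
  have := IsLocalRing.quotient (span_pow_ne_top hπ (Nat.one_le_iff_ne_zero.mp hn))
  have hunit := IsCanonicalRep.exists_isUnit haCan
  rw [hS, hS', ← Ideal.segment_span_singleton, ← Ideal.segment_span_singleton]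
  refine ⟨by rw [Ideal.card_segment _ _ hunit, card_span_pow_mk hπ hℓ, hq], ?_⟩
  rcases Set.eq_empty_or_nonempty (Ideal.segment _ a b ∩ Ideal.segment _ a' b') with
    hempty | ⟨x, hx, hx'⟩
  · exact Or.inl hempty
  have hann := annihilator_span_singleton_eq_span_pow hπ hvle (a - a')
    (fun i => (factor_eq_factor_iff hvle).mp (hveq i))
    fun hlt h => hvmax hlt fun i => (factor_eq_factor_iff hlt).mpr (h i)
  rw [Ideal.segment_eq_of_mem hx, Ideal.segment_eq_of_mem hx',
    Ideal.segment_inter_segment_of_isCanonicalRep haCan haCan', hann,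
    Ideal.span_singleton_pow_inf, Ideal.card_segment _ _ hunit,
    card_span_pow_mk hπ (max_le hℓ (Nat.sub_le n v)), hq]
  exact Or.inr (congrArg _ (by omega))

/-- In `R_n = R/(π)^n` (`R` a complete discrete valuation ring, residue
cardinality `q`, `ℓ ≤ n`): (a) every segment `{t·can_n(a) + b : t ∈ π^ℓ R_n}` of length
`q^{-ℓ}` in a direction `a ∈ ℙ^1(R_n)` has exactly `q^{n-ℓ}` elements; (b) the
intersection of two such segments in directions `a`, `a'` is either empty or has exactly
`q^{min(n-ℓ, v_n(a,a'))}` elements, where `v_n(a,a')` is the largest `v ≤ n` such that the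
canonical representatives of `a` and `a'` agree modulo `(π)^v`. -/
theorem segment_card_and_intersection
    (R : Type*) [CommRing R] [IsDomain R] [IsDiscreteValuationRing R]
    [IsAdicComplete (IsLocalRing.maximalIdeal R) R]
    [Finite (IsLocalRing.ResidueField R)]
    (q : ℕ) (hq : q = Nat.card (IsLocalRing.ResidueField R))
    (π : R) (hπ : Irreducible π)
    (n ℓ : ℕ) (hn : 1 ≤ n) (hℓ : ℓ ≤ n)
    (a a' : Fin 2 → R ⧸ (Ideal.span {π} : Ideal R) ^ n)
    (haCan : ∃ j, a j = 1 ∧ ∀ i < j, ¬IsUnit (a i))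
    (haCan' : ∃ j, a' j = 1 ∧ ∀ i < j, ¬IsUnit (a' i))
    (b b' : Fin 2 → R ⧸ (Ideal.span {π} : Ideal R) ^ n)
    (S S' : Set (Fin 2 → R ⧸ (Ideal.span {π} : Ideal R) ^ n))
    (hS : S = {x | ∃ s : R ⧸ (Ideal.span {π} : Ideal R) ^ n,
      x = fun i => (Ideal.Quotient.mk _ π) ^ ℓ * s * a i + b i})
    (hS' : S' = {x | ∃ s : R ⧸ (Ideal.span {π} : Ideal R) ^ n,
      x = fun i => (Ideal.Quotient.mk _ π) ^ ℓ * s * a' i + b' i})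
    (v : ℕ) (hvle : v ≤ n)
    (hveq : ∀ i,
      Ideal.Quotient.factor (Ideal.pow_le_pow_right hvle) (a i) =
      Ideal.Quotient.factor (Ideal.pow_le_pow_right hvle) (a' i))
    (hvmax : ∀ h : v + 1 ≤ n, ¬ ∀ i,
      Ideal.Quotient.factor (Ideal.pow_le_pow_right h) (a i) =
      Ideal.Quotient.factor (Ideal.pow_le_pow_right h) (a' i)) :
    Nat.card S = q ^ (n - ℓ) ∧
    (S ∩ S' = ∅ ∨ Nat.card ↥(S ∩ S') = q ^ (min (n - ℓ) v)) :=
  segment_card_and_intersection_general R q hq π hπ n ℓ hn hℓ a a' haCan haCan' b b' S S' hS hS' v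
    hvle hveq hvmax
end
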